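/- Let T ∈ B(H) be a contraction with unitary dilation U ∈ B(K), K ⊇ H, so that Tⁿ = P_H Uⁿ|_H for all n ≥ 0. Then for any polynomial p (in one complex variable) ‖p(T)‖ ≤ ‖p(U)‖ ≤ sup_{|ξ|=1} |p(ξ)| (von Neumann's inequality via dilation), and more generally for any n×n matrix (p_{ij}) of polynomials, ‖(p_{ij}(T))‖_{Mₙ(B(H))} ≤ sup_{|ξ|=1} ‖(p_{ij}(ξ))‖_{Mₙ(ℂ)}. -/

import Mathlib

/-!
Since `Tⁿ = P_H Uⁿ|_H`, every polynomial in `T` is the compression of the same polynomial in `U`,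
and compressing (entrywise, for a matrix of operators) does not increase norms. For the unitary
`U`, the continuous functional calculus is a *-homomorphism `C(σ(U)) → B(K)`; applied entrywise
it gives a *-homomorphism `C(σ(U), Mₙ(ℂ)) → B(Kⁿ)`, and *-homomorphisms between C*-algebras are
contractive. Finally `σ(U)` lies on the unit circle.
-/

/-- A matrix of operators, viewed as one operator on the Hilbert-space direct sum
`ℓ²`-sum of `n` copies of `H`; this realizes the C*-norm on `Mₙ(B(H))`. -/
noncomputable def blockOp {n : ℕ} {H : Type*} [NormedAddCommGroup H]
    [InnerProductSpace ℂ H] (M : Matrix (Fin n) (Fin n) (H →L[ℂ] H)) :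
    PiLp 2 (fun _ : Fin n => H) →L[ℂ] PiLp 2 (fun _ : Fin n => H) :=
  (PiLp.continuousLinearEquiv 2 ℂ (fun _ : Fin n => H)).symm.toContinuousLinearMap
    ∘L (ContinuousLinearMap.pi fun i =>
          ∑ j : Fin n, (M i j).comp (ContinuousLinearMap.proj j))
    ∘L (PiLp.continuousLinearEquiv 2 ℂ (fun _ : Fin n => H)).toContinuousLinearMap

open scoped Matrix Matrix.Norms.L2Operator

section BlockOp

variable {n : ℕ} {H : Type*} [NormedAddCommGroup H] [InnerProductSpace ℂ H]

lemma blockOp_apply (M : Matrix (Fin n) (Fin n) (H →L[ℂ] H))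
    (x : PiLp 2 (fun _ : Fin n => H)) (i : Fin n) :
    blockOp M x i = ∑ j, M i j (x j) := by
  simp [blockOp]

lemma blockOp_zero : blockOp (0 : Matrix (Fin n) (Fin n) (H →L[ℂ] H)) = 0 := by
  ext x i
  simp [blockOp_apply]

lemma blockOp_add (A B : Matrix (Fin n) (Fin n) (H →L[ℂ] H)) :
    blockOp (A + B) = blockOp A + blockOp B := by
  ext x i
  simp [blockOp_apply, Finset.sum_add_distrib]

lemma blockOp_smul (c : ℂ) (A : Matrix (Fin n) (Fin n) (H →L[ℂ] H)) :
    blockOp (c • A) = c • blockOp A := by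
  ext x i
  simp [blockOp_apply, Finset.smul_sum]

lemma blockOp_mul (A B : Matrix (Fin n) (Fin n) (H →L[ℂ] H)) :
    blockOp (A * B) = blockOp A * blockOp B := by
  ext x i
  simp only [mul_apply_eq_comp, blockOp_apply, Matrix.mul_apply,
    sum_apply, map_sum]
  exact Finset.sum_comm

lemma blockOp_conjTranspose [CompleteSpace H] (A : Matrix (Fin n) (Fin n) (H →L[ℂ] H)) :
    blockOp Aᴴ = ContinuousLinearMap.adjoint (blockOp A) := by
  refine (ContinuousLinearMap.eq_adjoint_iff _ _).mpr fun x y => ?_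
  simp only [PiLp.inner_apply, blockOp_apply, Matrix.conjTranspose_apply, sum_inner, inner_sum,
    ContinuousLinearMap.star_eq_adjoint, ContinuousLinearMap.adjoint_inner_left]
  exact Finset.sum_comm

end BlockOp

section DiagOp

variable {ι H K : Type*}
  [NormedAddCommGroup H] [InnerProductSpace ℂ H] [NormedAddCommGroup K] [InnerProductSpace ℂ K]

noncomputable def diagOp (V : H →L[ℂ] K) :
    PiLp 2 (fun _ : ι => H) →L[ℂ] PiLp 2 (fun _ : ι => K) :=
  (PiLp.continuousLinearEquiv 2 ℂ (fun _ : ι => K)).symm.toContinuousLinearMap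
    ∘L ContinuousLinearMap.piMap (fun _ => V)
    ∘L (PiLp.continuousLinearEquiv 2 ℂ (fun _ : ι => H)).toContinuousLinearMap

@[simp]
lemma diagOp_apply (V : H →L[ℂ] K) (x : PiLp 2 (fun _ : ι => H)) (i : ι) :
    diagOp V x i = V (x i) :=
  rfl

lemma norm_diagOp_le [Fintype ι] (V : H →L[ℂ] K) :
    ‖(diagOp V : PiLp 2 (fun _ : ι => H) →L[ℂ] _)‖ ≤ ‖V‖ := by
  refine ContinuousLinearMap.opNorm_le_bound _ (norm_nonneg _) fun x => ?_
  refine (sq_le_sq₀ (norm_nonneg _) (by positivity)).mp ?_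
  calc ‖diagOp V x‖ ^ 2 = ∑ i, ‖V (x i)‖ ^ 2 := by simp [PiLp.norm_sq_eq_of_L2]
    _ ≤ ∑ i, (‖V‖ * ‖x i‖) ^ 2 := by gcongr with i; exact V.le_opNorm (x i)
    _ = (‖V‖ * ‖x‖) ^ 2 := by simp [mul_pow, PiLp.norm_sq_eq_of_L2, Finset.mul_sum]

end DiagOp

lemma ContinuousLinearMap.opNorm_comp_comp_le {𝕜 E F : Type*} [NontriviallyNormedField 𝕜]
    [SeminormedAddCommGroup E] [NormedSpace 𝕜 E] [SeminormedAddCommGroup F] [NormedSpace 𝕜 F]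
    (W : F →L[𝕜] E) (A : F →L[𝕜] F) (V : E →L[𝕜] F) :
    ‖W ∘L A ∘L V‖ ≤ ‖W‖ * ‖A‖ * ‖V‖ := by
  rw [mul_assoc]
  exact (W.opNorm_comp_le _).trans (by gcongr; exact A.opNorm_comp_le V)

section Compression

variable {n : ℕ} {H K : Type*}
  [NormedAddCommGroup H] [InnerProductSpace ℂ H] [NormedAddCommGroup K] [InnerProductSpace ℂ K]

lemma blockOp_comp_comp (W : K →L[ℂ] H) (N : Matrix (Fin n) (Fin n) (K →L[ℂ] K))
    (V : H →L[ℂ] K) :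
    blockOp (Matrix.of fun i j => W ∘L N i j ∘L V) = diagOp W ∘L blockOp N ∘L diagOp V := by
  ext x i
  simp [blockOp_apply, map_sum]

lemma norm_blockOp_comp_comp_le (W : K →L[ℂ] H) (N : Matrix (Fin n) (Fin n) (K →L[ℂ] K))
    (V : H →L[ℂ] K) :
    ‖blockOp (Matrix.of fun i j => W ∘L N i j ∘L V)‖ ≤ ‖W‖ * ‖blockOp N‖ * ‖V‖ := by
  rw [blockOp_comp_comp]
  refine (ContinuousLinearMap.opNorm_comp_comp_le _ _ _).trans ?_
  gcongr <;> exact norm_diagOp_le _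

end Compression

lemma Polynomial.continuous_matrix_map_eval {m n R : Type*} [Semiring R] [TopologicalSpace R]
    [IsTopologicalSemiring R] (P : Matrix m n (Polynomial R)) :
    Continuous fun x => P.map (Polynomial.eval x) :=
  continuous_pi fun i => continuous_pi fun j => (P i j).continuous

lemma Polynomial.aeval_eq_comp_comp_of_pow_eq {𝕜 E F : Type*} [NontriviallyNormedField 𝕜]
    [NormedAddCommGroup E] [NormedSpace 𝕜 E] [NormedAddCommGroup F] [NormedSpace 𝕜 F]
    {T : E →L[𝕜] E} {U : F →L[𝕜] F} {W : F →L[𝕜] E} {V : E →L[𝕜] F}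
    (h : ∀ n : ℕ, T ^ n = W ∘L (U ^ n) ∘L V) (p : Polynomial 𝕜) :
    Polynomial.aeval T p = W ∘L Polynomial.aeval U p ∘L V := by
  induction p using Polynomial.induction_on' with
  | add p q hp hq =>
    rw [map_add, map_add, hp, hq]
    ext x
    simp
  | monomial k c =>
    rw [Polynomial.aeval_monomial, Polynomial.aeval_monomial, h k]
    ext x
    simp [Algebra.algebraMap_eq_smul_one]

lemma le_sSup_of_norm_eq_one {f : ℂ → ℝ} (hf : Continuous f) {ξ : ℂ} (hξ : ‖ξ‖ = 1) :
    f ξ ≤ sSup {r : ℝ | ∃ ξ : ℂ, ‖ξ‖ = 1 ∧ r = f ξ} := by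
  refine le_csSup (((isCompact_sphere (0 : ℂ) 1).bddAbove_image hf.continuousOn).mono ?_)
    ⟨ξ, hξ, rfl⟩
  rintro _ ⟨ζ, hζ, rfl⟩
  exact ⟨ζ, mem_sphere_zero_iff_norm.mpr hζ, rfl⟩

namespace ContinuousMap

variable {X m n R : Type*} [TopologicalSpace X] [TopologicalSpace R]

def entry (f : C(X, Matrix m n R)) (i : m) (j : n) : C(X, R) :=
  ⟨fun x => f x i j, by fun_prop⟩

@[simp]
lemma entry_apply (f : C(X, Matrix m n R)) (i : m) (j : n) (x : X) : f.entry i j x = f x i j :=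
  rfl

@[simp]
lemma entry_zero [Zero R] (i : m) (j : n) : (0 : C(X, Matrix m n R)).entry i j = 0 :=
  rfl

@[simp]
lemma entry_add [Add R] [ContinuousAdd R] (f g : C(X, Matrix m n R)) (i : m) (j : n) :
    (f + g).entry i j = f.entry i j + g.entry i j :=
  rfl

@[simp]
lemma entry_smul {S : Type*} [SMul S R] [ContinuousConstSMul S R] (c : S)
    (f : C(X, Matrix m n R)) (i : m) (j : n) : (c • f).entry i j = c • f.entry i j :=
  rfl

@[simp]
lemma entry_mul [Fintype n] [NonUnitalNonAssocSemiring R] [IsTopologicalSemiring R]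
    (f : C(X, Matrix n n R)) (g : C(X, Matrix n n R)) (i j : n) :
    (f * g).entry i j = ∑ k, f.entry i k * g.entry k j := by
  ext x
  simp [Matrix.mul_apply]

@[simp]
lemma entry_star [Star R] [ContinuousStar R] (f : C(X, Matrix n n R)) (i j : n) :
    (star f).entry i j = star (f.entry j i) :=
  rfl

end ContinuousMap

section Amplification

variable {X K : Type*} [TopologicalSpace X]
  [NormedAddCommGroup K] [InnerProductSpace ℂ K] [CompleteSpace K] {n : ℕ}

noncomputable def blockAmplification (φ : C(X, ℂ) →⋆ₙₐ[ℂ] (K →L[ℂ] K)) :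
    C(X, Matrix (Fin n) (Fin n) ℂ)
      →⋆ₙₐ[ℂ] (PiLp 2 (fun _ : Fin n => K) →L[ℂ] PiLp 2 (fun _ : Fin n => K)) where
  toFun f := blockOp (Matrix.of fun i j => φ (f.entry i j))
  map_add' f g := by
    rw [← blockOp_add]
    congr 1
    ext i j
    simp
  map_smul' c f := by
    rw [MonoidHom.id_apply, ← blockOp_smul]
    congr 1
    ext i j
    simp
  map_zero' := by
    rw [← blockOp_zero]
    congr 1
    ext i j
    simp
  map_mul' f g := by
    rw [← blockOp_mul]
    congr 1
    ext i j
    simp [Matrix.mul_apply]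
  map_star' f := by
    rw [ContinuousLinearMap.star_eq_adjoint, ← blockOp_conjTranspose]
    congr 1
    ext i j : 1
    simp [map_star]

end Amplification

lemma norm_blockOp_map_aeval_le {K : Type*} [NormedAddCommGroup K] [InnerProductSpace ℂ K]
    [CompleteSpace K] (U : K →L[ℂ] K) [hU : IsStarNormal U] {n : ℕ}
    (P : Matrix (Fin n) (Fin n) (Polynomial ℂ)) {c : ℝ} (hc : 0 ≤ c)
    (h : ∀ ξ ∈ spectrum ℂ U, ‖P.map (Polynomial.eval ξ)‖ ≤ c) :
    ‖blockOp (P.map fun p => Polynomial.aeval U p)‖ ≤ c := by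
  let f : C(spectrum ℂ U, Matrix (Fin n) (Fin n) ℂ) :=
    ⟨fun ξ => P.map (Polynomial.eval (ξ : ℂ)),
      (Polynomial.continuous_matrix_map_eval P).comp continuous_subtype_val⟩
  have hf : blockAmplification (cfcHom hU).toNonUnitalStarAlgHom f
      = blockOp (P.map fun p => Polynomial.aeval U p) := by
    refine congrArg blockOp (Matrix.ext fun i j => ?_)
    calc cfcHom hU (f.entry i j) = cfc (fun ξ => (P i j).eval ξ) U := by
          rw [cfc_apply _ U]
          rfl
      _ = Polynomial.aeval U (P i j) := cfc_polynomial _ _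
  rw [← hf]
  exact (NonUnitalStarAlgHom.norm_apply_le _ f).trans
    ((ContinuousMap.norm_le f hc).mpr fun ξ => h ξ ξ.2)

theorem stmt19_general {H K : Type*}
    [NormedAddCommGroup H] [InnerProductSpace ℂ H] [CompleteSpace H]
    [NormedAddCommGroup K] [InnerProductSpace ℂ K] [CompleteSpace K]
    (T : H →L[ℂ] H)
    (V : H →L[ℂ] K) (hV : ∀ x : H, ‖V x‖ = ‖x‖)
    (U : K →L[ℂ] K)
    (hU : ContinuousLinearMap.adjoint U * U = 1 ∧ U * ContinuousLinearMap.adjoint U = 1)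
    (hdil : ∀ n : ℕ, T ^ n = ContinuousLinearMap.adjoint V ∘L (U ^ n) ∘L V) :
    (∀ p : Polynomial ℂ,
      ‖Polynomial.aeval T p‖ ≤ ‖Polynomial.aeval U p‖
      ∧ ‖Polynomial.aeval U p‖
          ≤ sSup {r : ℝ | ∃ ξ : ℂ, ‖ξ‖ = 1 ∧ r = ‖Polynomial.eval ξ p‖})
    ∧ ∀ (n : ℕ) (P : Matrix (Fin n) (Fin n) (Polynomial ℂ)),
        ‖blockOp (P.map fun p => Polynomial.aeval T p)‖
          ≤ sSup {r : ℝ | ∃ ξ : ℂ, ‖ξ‖ = 1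
              ∧ r = ‖Matrix.toEuclideanCLM (𝕜 := ℂ) (P.map (Polynomial.eval ξ))‖} := by
  have hUu : U ∈ unitary (K →L[ℂ] K) := by
    rwa [Unitary.mem_iff, ContinuousLinearMap.star_eq_adjoint]
  have hUnormal := isStarNormal_of_mem_unitary hUu
  have hspec (ξ : ℂ) (hξ : ξ ∈ spectrum ℂ U) : ‖ξ‖ = 1 :=
    mem_sphere_zero_iff_norm.mp (spectrum.subset_circle_of_unitary hUu hξ)
  have hV1 : ‖V‖ ≤ 1 := V.opNorm_le_bound zero_le_one fun x => by rw [hV, one_mul]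
  have hVadj1 : ‖ContinuousLinearMap.adjoint V‖ ≤ 1 := by rwa [LinearIsometryEquiv.norm_map]
  have hcompress (a : ℝ) (ha : 0 ≤ a) : ‖ContinuousLinearMap.adjoint V‖ * a * ‖V‖ ≤ a := by
    simpa using mul_le_mul (mul_le_of_le_one_left ha hVadj1) hV1 (norm_nonneg V) ha
  have hdil' := Polynomial.aeval_eq_comp_comp_of_pow_eq hdil
  refine ⟨fun p => ⟨?_, ?_⟩, fun n P => ?_⟩
  · rw [hdil']
    exact (ContinuousLinearMap.opNorm_comp_comp_le _ _ _).trans (hcompress _ (norm_nonneg _))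
  · have hf : Continuous fun ξ : ℂ => ‖Polynomial.eval ξ p‖ := p.continuous.norm
    rw [← cfc_polynomial p U]
    exact norm_cfc_le ((norm_nonneg _).trans (le_sSup_of_norm_eq_one hf norm_one))
      fun ξ hξ => le_sSup_of_norm_eq_one hf (hspec ξ hξ)
  · have hf : Continuous fun ξ : ℂ =>
        ‖Matrix.toEuclideanCLM (𝕜 := ℂ) (P.map (Polynomial.eval ξ))‖ :=
      (Polynomial.continuous_matrix_map_eval P).norm
    have hmat : (P.map fun p => Polynomial.aeval T p) = Matrix.of fun i j =>
        ContinuousLinearMap.adjoint V ∘L (P.map fun p => Polynomial.aeval U p) i j ∘L V :=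
      Matrix.ext fun i j => hdil' (P i j)
    rw [hmat]
    refine (norm_blockOp_comp_comp_le _ _ _).trans ((hcompress _ (norm_nonneg _)).trans ?_)
    exact norm_blockOp_map_aeval_le U P
      ((norm_nonneg _).trans (le_sSup_of_norm_eq_one hf norm_one))
      fun ξ hξ => le_sSup_of_norm_eq_one hf (hspec ξ hξ)

/-- von Neumann's inequality via unitary dilation, with matrix version:
if `T` is a contraction with unitary dilation `U` (here `V : H → K` is the isometric
inclusion and `adjoint V` the orthogonal projection `P_H`, so `Tⁿ = P_H Uⁿ|_H`), then
for every polynomial `p`, `‖p(T)‖ ≤ ‖p(U)‖ ≤ sup_{|ξ|=1} |p(ξ)|`, and for every n×n matrix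
`(p_{ij})` of polynomials, `‖(p_{ij}(T))‖_{Mₙ(B(H))} ≤ sup_{|ξ|=1} ‖(p_{ij}(ξ))‖_{Mₙ(ℂ)}`. -/
theorem stmt19 {H K : Type*}
    [NormedAddCommGroup H] [InnerProductSpace ℂ H] [CompleteSpace H]
    [NormedAddCommGroup K] [InnerProductSpace ℂ K] [CompleteSpace K]
    (T : H →L[ℂ] H) (hT : ‖T‖ ≤ 1)
    (V : H →L[ℂ] K) (hV : ∀ x : H, ‖V x‖ = ‖x‖)
    (U : K →L[ℂ] K)
    (hU : ContinuousLinearMap.adjoint U * U = 1 ∧ U * ContinuousLinearMap.adjoint U = 1)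
    (hdil : ∀ n : ℕ, T ^ n = ContinuousLinearMap.adjoint V ∘L (U ^ n) ∘L V) :
    (∀ p : Polynomial ℂ,
      ‖Polynomial.aeval T p‖ ≤ ‖Polynomial.aeval U p‖
      ∧ ‖Polynomial.aeval U p‖
          ≤ sSup {r : ℝ | ∃ ξ : ℂ, ‖ξ‖ = 1 ∧ r = ‖Polynomial.eval ξ p‖})
    ∧ ∀ (n : ℕ) (P : Matrix (Fin n) (Fin n) (Polynomial ℂ)),
        ‖blockOp (P.map fun p => Polynomial.aeval T p)‖
          ≤ sSup {r : ℝ | ∃ ξ : ℂ, ‖ξ‖ = 1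
              ∧ r = ‖Matrix.toEuclideanCLM (𝕜 := ℂ) (P.map (Polynomial.eval ξ))‖} :=
  stmt19_general T V hV U hU hdil
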